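/- Let q be a power of an odd prime, a = (α_1, …, α_n) an n-tuple of distinct elements of F_q, and 1 ≤ k ≤ ⌊n/2⌋. Then there exists v = (v_1, …, v_n) with each v_i ∈ F_q^* such that GRS_k(a, v) is self-orthogonal if and only if there exists a nonzero polynomial ω(x) = ω_{n−2k}x^{n−2k} + ⋯ + ω_1 x + ω_0 ∈ F_q[x] (of degree at most n − 2k) such that η(ω(α_i)·L_a(α_i)) = 1 for all 1 ≤ i ≤ n. -/

import Mathlib

/-- The Euclidean dual of a linear code `C ⊆ F^n`. -/
def dualCode {F : Type*} [Field F] {n : ℕ} (C : Submodule F (Fin n → F)) :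
    Submodule F (Fin n → F) where
  carrier := {x | ∀ c ∈ C, ∑ i, x i * c i = 0}
  add_mem' := by
    intro a b ha hb c hc
    simp only [Set.mem_setOf_eq] at ha hb ⊢
    simp [Pi.add_apply, add_mul, Finset.sum_add_distrib, ha c hc, hb c hc]
  zero_mem' := by intro c hc; simp
  smul_mem' := by
    intro r a ha c hc
    simp only [Set.mem_setOf_eq] at ha ⊢
    simp [Pi.smul_apply, smul_eq_mul, mul_assoc, ← Finset.mul_sum, ha c hc]

/-- `C` has minimum Hamming distance `d`. -/
def IsMinDist {F : Type*} [Field F] [DecidableEq F] {n : ℕ}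
    (C : Submodule F (Fin n → F)) (d : ℕ) : Prop :=
  (∀ c ∈ C, c ≠ 0 → d ≤ hammingNorm c) ∧ ∃ c ∈ C, c ≠ 0 ∧ hammingNorm c = d

/-- The generalized Reed–Solomon code `GRS_k(a, v)`:
codewords `(v₁ f(α₁), …, v_n f(α_n))` for `deg f ≤ k − 1`. -/
noncomputable def GRSCode (F : Type*) [Field F] {n : ℕ} (k : ℕ) (a v : Fin n → F) :
    Submodule F (Fin n → F) :=
  (Polynomial.degreeLT F k).map
    (LinearMap.pi fun i => v i • ((Polynomial.aeval (a i)).toLinearMap : Polynomial F →ₗ[F] F))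

/-- The extended generalized Reed–Solomon code `GRS_k(a, v, ∞)` of length `n + 1`:
codewords `(v₁ f(α₁), …, v_n f(α_n), f_{k−1})` for `deg f ≤ k − 1`, where `f_{k−1}`
is the coefficient of `x^{k−1}` in `f`. -/
noncomputable def extGRSCode (F : Type*) [Field F] {n : ℕ} (k : ℕ) (a v : Fin n → F) :
    Submodule F (Fin (n + 1) → F) :=
  (Polynomial.degreeLT F k).map
    (LinearMap.pi fun i : Fin (n + 1) =>
      if h : (i : ℕ) < n then
        v ⟨i, h⟩ • ((Polynomial.aeval (a ⟨i, h⟩)).toLinearMap : Polynomial F →ₗ[F] F)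
      else Polynomial.lcoeff F (k - 1))

section Aux

open Polynomial Finset

variable {F : Type*} [Field F]

private lemma L_ne_zero' {n : ℕ} {a : Fin n → F} (ha : Function.Injective a) (i : Fin n) :
    ∏ j ∈ univ.erase i, (a i - a j) ≠ 0 := by
  refine Finset.prod_ne_zero_iff.mpr fun j hj => ?_
  have hij : j ≠ i := (Finset.mem_erase.mp hj).1
  exact sub_ne_zero.mpr fun h => hij (ha h.symm)

private lemma coeff_eq_sum' {n : ℕ} (a : Fin n → F) (ha : Function.Injective a)
    (p : F[X]) (hp : p.degree < (n : WithBot ℕ)) :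
    p.coeff (n - 1) = ∑ i, p.eval (a i) * (∏ j ∈ univ.erase i, (a i - a j))⁻¹ := by
  have hinj : Set.InjOn a ↑(univ : Finset (Fin n)) := ha.injOn
  have hcard : (univ : Finset (Fin n)).card = n := Finset.card_fin n
  have hlt : p.degree < ((univ : Finset (Fin n)).card : WithBot ℕ) := by rw [hcard]; exact hp
  have hrepr := Lagrange.eq_interpolate hinj hlt
  conv_lhs => rw [hrepr]
  rw [Lagrange.interpolate_apply, Polynomial.finset_sum_coeff]
  refine Finset.sum_congr rfl fun i _ => ?_
  rw [Polynomial.coeff_C_mul]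
  congr 1
  have hnd : (Lagrange.basis univ a i).natDegree = n - 1 := by
    rw [Lagrange.natDegree_basis hinj (mem_univ i), hcard]
  rw [← hnd, Polynomial.coeff_natDegree]
  rw [Lagrange.basis, leadingCoeff_prod, ← Finset.prod_inv_distrib]
  refine Finset.prod_congr rfl fun j _ => ?_
  rw [Lagrange.basisDivisor, leadingCoeff_mul, leadingCoeff_C, leadingCoeff_X_sub_C, mul_one]

private lemma degree_interp_le' {n k : ℕ} (hk1 : 1 ≤ k) (hnk : 2 * k ≤ n) (a : Fin n → F)
    (ha : Function.Injective a) (u : Fin n → F)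
    (hu : ∀ m < 2 * k - 1, ∑ i, u i * a i ^ m = 0)
    (w : F[X]) (hwd : w.degree < (n : WithBot ℕ))
    (hw : ∀ i, w.eval (a i) = u i * ∏ j ∈ univ.erase i, (a i - a j)) :
    w.degree ≤ ((n - 2 * k : ℕ) : WithBot ℕ) := by
  have key : ∀ m, m < 2 * k - 1 → w.coeff (n - 1 - m) = 0 := by
    intro m
    induction m using Nat.strong_induction_on with
    | _ m IH =>
      intro hm
      have hdw : w.degree ≤ ((n - 1 - m : ℕ) : WithBot ℕ) := by
        rw [degree_le_iff_coeff_zero]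
        intro j hj
        rw [Nat.cast_lt] at hj
        by_cases hjn : j < n
        · have hj' : j = n - 1 - (n - 1 - j) := by omega
          rw [hj']
          exact IH (n - 1 - j) (by omega) (by omega)
        · exact coeff_eq_zero_of_degree_lt (lt_of_lt_of_le hwd (by exact_mod_cast by omega))
      have hdeg : (w * X ^ m).degree < (n : WithBot ℕ) := by
        calc (w * X ^ m).degree ≤ w.degree + (X ^ m : F[X]).degree := degree_mul_le _ _
        _ ≤ ((n - 1 - m : ℕ) : WithBot ℕ) + m := add_le_add hdw (by rw [degree_X_pow])
        _ = ((n - 1 - m + m : ℕ) : WithBot ℕ) := by rw [Nat.cast_add]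
        _ < (n : WithBot ℕ) := by exact_mod_cast by omega
      have hc := coeff_eq_sum' a ha (w * X ^ m) hdeg
      have hsum : ∑ i, (w * X ^ m).eval (a i) * (∏ j ∈ univ.erase i, (a i - a j))⁻¹
          = ∑ i, u i * a i ^ m := by
        refine Finset.sum_congr rfl fun i _ => ?_
        rw [eval_mul, eval_pow, eval_X, hw i]
        field_simp [L_ne_zero' ha i]
      have hidx : n - 1 = (n - 1 - m) + m := by omega
      rw [hidx, coeff_mul_X_pow] at hc
      rw [hc, hsum, hu m hm]
  rw [degree_le_iff_coeff_zero]
  intro j hj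
  rw [Nat.cast_lt] at hj
  by_cases hjn : j < n
  · have hj' : j = n - 1 - (n - 1 - j) := by omega
    rw [hj']
    exact key (n - 1 - j) (by omega)
  · exact coeff_eq_zero_of_degree_lt (lt_of_lt_of_le hwd (by exact_mod_cast by omega))

private lemma mem_GRS' {n k : ℕ} {a v : Fin n → F} {x : Fin n → F} :
    x ∈ GRSCode F k a v ↔ ∃ f ∈ Polynomial.degreeLT F k, ∀ i, x i = v i * f.eval (a i) := by
  simp only [GRSCode, Submodule.mem_map]
  constructor
  · rintro ⟨f, hf, rfl⟩
    exact ⟨f, hf, fun i => by simp [LinearMap.pi_apply, smul_eq_mul]⟩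
  · rintro ⟨f, hf, hx⟩
    refine ⟨f, hf, funext fun i => ?_⟩
    simp [LinearMap.pi_apply, smul_eq_mul, hx i]

private lemma selforth_iff' {n k : ℕ} (hk1 : 1 ≤ k) (a v : Fin n → F) :
    GRSCode F k a v ≤ dualCode (GRSCode F k a v) ↔
      ∀ m < 2 * k - 1, ∑ i, v i ^ 2 * a i ^ m = 0 := by
  constructor
  · intro h m hm
    set m1 := min m (k - 1) with hm1
    set m2 := m - m1 with hm2
    have hm1k : m1 < k := by omega
    have hm2k : m2 < k := by omega
    have hmem1 : (X ^ m1 : F[X]) ∈ Polynomial.degreeLT F k := by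
      rw [Polynomial.mem_degreeLT, Polynomial.degree_X_pow]
      exact_mod_cast hm1k
    have hmem2 : (X ^ m2 : F[X]) ∈ Polynomial.degreeLT F k := by
      rw [Polynomial.mem_degreeLT, Polynomial.degree_X_pow]
      exact_mod_cast hm2k
    have h1 : (fun i => v i * (X ^ m1 : F[X]).eval (a i)) ∈ GRSCode F k a v :=
      mem_GRS'.mpr ⟨X ^ m1, hmem1, fun i => rfl⟩
    have h2 : (fun i => v i * (X ^ m2 : F[X]).eval (a i)) ∈ GRSCode F k a v :=
      mem_GRS'.mpr ⟨X ^ m2, hmem2, fun i => rfl⟩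
    have := h h1 _ h2
    rw [← this]
    refine Finset.sum_congr rfl fun i _ => ?_
    simp only [Polynomial.eval_pow, Polynomial.eval_X]
    have hmm : m = m1 + m2 := by omega
    rw [hmm, pow_add]; ring
  · intro h x hx c hc
    obtain ⟨f, hf, hxf⟩ := mem_GRS'.mp hx
    obtain ⟨g, hg, hcg⟩ := mem_GRS'.mp hc
    have hfk : f.natDegree < k := by
      rcases eq_or_ne f 0 with rfl | hf0
      · simpa using (by omega : 0 < k)
      · exact Polynomial.natDegree_lt_iff_degree_lt hf0 |>.mpr (Polynomial.mem_degreeLT.mp hf)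
    have hgk : g.natDegree < k := by
      rcases eq_or_ne g 0 with rfl | hg0
      · simpa using (by omega : 0 < k)
      · exact Polynomial.natDegree_lt_iff_degree_lt hg0 |>.mpr (Polynomial.mem_degreeLT.mp hg)
    calc ∑ i, x i * c i
        = ∑ i, ∑ s ∈ range k, ∑ t ∈ range k,
            (f.coeff s * g.coeff t) * (v i ^ 2 * a i ^ (s + t)) := by
          refine Finset.sum_congr rfl fun i _ => ?_
          rw [hxf i, hcg i, Polynomial.eval_eq_sum_range' hfk, Polynomial.eval_eq_sum_range' hgk,
            show (v i * ∑ s ∈ range k, f.coeff s * a i ^ s) *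
                (v i * ∑ t ∈ range k, g.coeff t * a i ^ t)
              = v i ^ 2 * ((∑ s ∈ range k, f.coeff s * a i ^ s) *
                  ∑ t ∈ range k, g.coeff t * a i ^ t) by ring,
            Finset.sum_mul_sum, Finset.mul_sum]
          refine Finset.sum_congr rfl fun s _ => ?_
          rw [Finset.mul_sum]
          refine Finset.sum_congr rfl fun t _ => ?_
          rw [pow_add]; ring
      _ = ∑ s ∈ range k, ∑ t ∈ range k,
            (f.coeff s * g.coeff t) * ∑ i, v i ^ 2 * a i ^ (s + t) := by
          rw [Finset.sum_comm]
          refine Finset.sum_congr rfl fun s _ => ?_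
          rw [Finset.sum_comm]
          refine Finset.sum_congr rfl fun t _ => ?_
          rw [Finset.mul_sum]
      _ = 0 := by
          refine Finset.sum_eq_zero fun s hs => Finset.sum_eq_zero fun t ht => ?_
          rw [h (s + t) (by simp only [Finset.mem_range] at hs ht; omega), mul_zero]

end Aux

open Finset in
/-- Lemma 2.3: for `1 ≤ k ≤ ⌊n/2⌋`, some `GRS_k(a, v)` is self-orthogonal iff there is a
nonzero polynomial `ω` of degree at most `n − 2k` with `η(ω(α_i)·L_a(α_i)) = 1` for all `i`. -/
theorem grs_self_orthogonal_iff
    (q : ℕ) (hq_pp : IsPrimePow q) (hq_odd : Odd q)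
    (F : Type*) [Field F] [Fintype F] [DecidableEq F] (hF : Fintype.card F = q)
    (n k : ℕ) (hk1 : 1 ≤ k) (hk2 : k ≤ n / 2)
    (a : Fin n → F) (ha : Function.Injective a) :
    (∃ v : Fin n → F, (∀ i, v i ≠ 0) ∧
        GRSCode F k a v ≤ dualCode (GRSCode F k a v)) ↔
      ∃ ω : Polynomial F, ω ≠ 0 ∧ ω.degree ≤ ((n - 2 * k : ℕ) : WithBot ℕ) ∧
        ∀ i : Fin n,
          quadraticChar F (ω.eval (a i) * ∏ m ∈ univ.erase i, (a i - a m)) = 1 := by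
  classical
  have hnk : 2 * k ≤ n := by omega
  have hn2 : 0 < n := by omega
  set L : Fin n → F := fun i => ∏ m ∈ univ.erase i, (a i - a m) with hLdef
  have hL : ∀ i, L i ≠ 0 := L_ne_zero' ha
  constructor
  · rintro ⟨v, hv, hself⟩
    have hsum := (selforth_iff' hk1 a v).mp hself
    have hinj : Set.InjOn a ↑(univ : Finset (Fin n)) := ha.injOn
    set w := Lagrange.interpolate univ a (fun i => v i ^ 2 * L i) with hwdef
    have hwd : w.degree < ((n : ℕ) : WithBot ℕ) := by
      have := Lagrange.degree_interpolate_lt (fun i => v i ^ 2 * L i) hinj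
      rwa [Finset.card_fin] at this
    have hweval : ∀ i, w.eval (a i) = v i ^ 2 * L i := fun i =>
      Lagrange.eval_interpolate_at_node _ hinj (mem_univ i)
    have hdeg := degree_interp_le' hk1 hnk a ha (fun i => v i ^ 2) hsum w hwd hweval
    refine ⟨w, ?_, hdeg, ?_⟩
    · intro h0
      have := hweval ⟨0, hn2⟩
      rw [h0, Polynomial.eval_zero] at this
      exact (mul_ne_zero (pow_ne_zero 2 (hv _)) (hL _)) this.symm
    · intro i
      rw [hweval i]
      have hsq : v i ^ 2 * L i * L i = (v i * L i) * (v i * L i) := by ring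
      have hne : v i ^ 2 * L i * L i ≠ 0 := by
        rw [hsq]; exact mul_ne_zero (mul_ne_zero (hv i) (hL i)) (mul_ne_zero (hv i) (hL i))
      exact (quadraticChar_one_iff_isSquare hne).mpr ⟨v i * L i, hsq⟩
  · rintro ⟨ω, hω0, hωdeg, hη⟩
    have hsqex : ∀ i, ∃ s : F, s ≠ 0 ∧ ω.eval (a i) * L i = s * s := by
      intro i
      have hne : ω.eval (a i) * L i ≠ 0 := by
        intro h
        have h1 := hη i
        rw [show (∏ m ∈ univ.erase i, (a i - a m)) = L i from rfl, h,
          quadraticChar_zero] at h1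
        exact zero_ne_one h1
      obtain ⟨s, hs⟩ := (quadraticChar_one_iff_isSquare hne).mp (hη i)
      exact ⟨s, fun h => hne (by rw [hs, h, mul_zero]), hs⟩
    choose s hs0 hs using hsqex
    refine ⟨fun i => s i * (L i)⁻¹, fun i => mul_ne_zero (hs0 i) (inv_ne_zero (hL i)), ?_⟩
    rw [selforth_iff' hk1]
    intro m hm
    have hveq : ∀ i, (s i * (L i)⁻¹) ^ 2 * a i ^ m
        = (ω * Polynomial.X ^ m).eval (a i) * (L i)⁻¹ := by
      intro i
      rw [Polynomial.eval_mul, Polynomial.eval_pow, Polynomial.eval_X]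
      have h1 : (s i * (L i)⁻¹) ^ 2 = (ω.eval (a i) * L i) * ((L i)⁻¹ * (L i)⁻¹) := by
        rw [hs i]; ring
      rw [h1, show (ω.eval (a i) * L i) * ((L i)⁻¹ * (L i)⁻¹)
          = ω.eval (a i) * (L i * (L i)⁻¹) * (L i)⁻¹ by ring,
        mul_inv_cancel₀ (hL i), mul_one]
      ring
    have hd2 : (ω * Polynomial.X ^ m).degree < ((n - 1 : ℕ) : WithBot ℕ) := by
      calc (ω * Polynomial.X ^ m).degree
          ≤ ω.degree + (Polynomial.X ^ m : Polynomial F).degree :=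
            Polynomial.degree_mul_le _ _
      _ ≤ ((n - 2 * k : ℕ) : WithBot ℕ) + (m : ℕ) :=
            add_le_add hωdeg (by rw [Polynomial.degree_X_pow])
      _ = ((n - 2 * k + m : ℕ) : WithBot ℕ) := by rw [Nat.cast_add]
      _ < ((n - 1 : ℕ) : WithBot ℕ) := by exact_mod_cast by omega
    have hd : (ω * Polynomial.X ^ m).degree < ((n : ℕ) : WithBot ℕ) :=
      lt_trans hd2 (by exact_mod_cast by omega)
    calc ∑ i, (s i * (L i)⁻¹) ^ 2 * a i ^ m
        = ∑ i, (ω * Polynomial.X ^ m).eval (a i) * (L i)⁻¹ :=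
          Finset.sum_congr rfl fun i _ => hveq i
      _ = (ω * Polynomial.X ^ m).coeff (n - 1) := (coeff_eq_sum' a ha _ hd).symm
      _ = 0 := Polynomial.coeff_eq_zero_of_degree_lt hd2
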